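/- Let R be a finite directed weighted graph with no negative-weight directed cycles, let Δ > 0 be the minimum total weight among directed cycles of strictly positive weight, and let ε = Δ/(n+1) where n is the number of vertices. Form R' by deleting every edge that lies on some directed cycle of total weight 0, and decreasing every remaining edge weight by ε. Then every directed cycle of R' has strictly positive total weight. -/

import Mathlib

/-!
A closed walk that revisits a vertex splits at the repetition into two shorter closed walks
whose weights add up, so it suffices to show that simple cycles of `R'` have positive weight.
A simple cycle of `R'` is a cycle of `R` none of whose edges lies on a zero-weight cycle, so its
`R`-weight is positive, hence at least `Δ`; it has at most `n` edges, so lowering every weight by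
`ε = Δ / (n + 1)` costs at most `n Δ / (n + 1) < Δ`.
-/

/-- A directed cycle in the graph with edge relation `E`: a cyclic sequence of vertices all of
whose consecutive pairs (with wraparound, via `Fin` addition) are edges. -/
def IsCycle {V : Type*} (E : V → V → Prop) {ℓ : ℕ} (c : Fin (ℓ + 1) → V) : Prop :=
  ∀ j : Fin (ℓ + 1), E (c j) (c (j + 1))

/-- The total weight of a directed cycle. -/
def cycleWeight {V : Type*} (W : V → V → ℝ) {ℓ : ℕ} (c : Fin (ℓ + 1) → V) : ℝ :=
  ∑ j : Fin (ℓ + 1), W (c j) (c (j + 1))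

/-- The edge `⟨b, b'⟩` lies on some directed cycle of total weight `0`. -/
def OnZeroCycle {V : Type*} (E : V → V → Prop) (W : V → V → ℝ) (b b' : V) : Prop :=
  ∃ (ℓ : ℕ) (c : Fin (ℓ + 1) → V), IsCycle E c ∧ cycleWeight W c = 0 ∧
    ∃ j : Fin (ℓ + 1), c j = b ∧ c (j + 1) = b'

section CycleDecomposition

open Finset Fin.NatCast

variable {V : Type*}

section Subcycle

variable {ℓ : ℕ}

def subcycle (c : Fin (ℓ + 1) → V) (i : Fin (ℓ + 1)) (m : ℕ) : Fin (m + 1) → V :=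
  fun k => c (i + (k.val : Fin (ℓ + 1)))

variable {c : Fin (ℓ + 1) → V} {i : Fin (ℓ + 1)} {m : ℕ}

lemma subcycle_succ (hwrap : c (i + ((m + 1 : ℕ) : Fin (ℓ + 1))) = c i) (k : Fin (m + 1)) :
    subcycle c i m (k + 1) = c (i + (k.val : Fin (ℓ + 1)) + 1) := by
  rcases (Fin.le_last k).eq_or_lt with rfl | hk
  · rw [Fin.last_add_one, Fin.val_last, add_assoc, ← Nat.cast_succ, hwrap]
    simp [subcycle]
  · simp only [subcycle, Fin.val_add_one_of_lt hk, Nat.cast_succ, add_assoc]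

lemma isCycle_subcycle {P : V → V → Prop} (hc : IsCycle P c)
    (hwrap : c (i + ((m + 1 : ℕ) : Fin (ℓ + 1))) = c i) : IsCycle P (subcycle c i m) := by
  intro k
  rw [subcycle_succ hwrap]
  exact hc _

lemma cycleWeight_subcycle (g : V → V → ℝ) (hwrap : c (i + ((m + 1 : ℕ) : Fin (ℓ + 1))) = c i) :
    cycleWeight g (subcycle c i m) =
      ∑ k ∈ range (m + 1), g (c (i + (k : Fin (ℓ + 1)))) (c (i + (k : Fin (ℓ + 1)) + 1)) := by
  rw [cycleWeight, ← Fin.sum_univ_eq_sum_range]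
  exact sum_congr rfl fun k _ => by rw [subcycle_succ hwrap]; rfl

end Subcycle

lemma cycleWeight_eq_sum_range {ℓ : ℕ} (g : V → V → ℝ) (c : Fin (ℓ + 1) → V) (i : Fin (ℓ + 1)) :
    cycleWeight g c =
      ∑ k ∈ range (ℓ + 1), g (c (i + (k : Fin (ℓ + 1)))) (c (i + (k : Fin (ℓ + 1)) + 1)) := by
  rw [← Fin.sum_univ_eq_sum_range (fun k => g (c (i + (k : Fin (ℓ + 1)))) (c (i + k + 1))),
    cycleWeight]
  simp only [Fin.cast_val_eq_self]
  exact (Equiv.sum_comp (Equiv.addLeft i) fun t => g (c t) (c (t + 1))).symm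

lemma exists_shorter_cycles_of_not_injective {ℓ : ℕ} {P : V → V → Prop} {c : Fin (ℓ + 1) → V}
    (hc : IsCycle P c) (hnc : ¬ Function.Injective c) (g : V → V → ℝ) :
    ∃ (a b : ℕ) (c₁ : Fin (a + 1) → V) (c₂ : Fin (b + 1) → V), a < ℓ ∧ b < ℓ ∧
      IsCycle P c₁ ∧ IsCycle P c₂ ∧ cycleWeight g c = cycleWeight g c₁ + cycleWeight g c₂ := by
  obtain ⟨i, j, hij, hlt⟩ : ∃ i j : Fin (ℓ + 1), c i = c j ∧ i < j := by
    obtain ⟨p, q, hpq, hne⟩ := Function.not_injective_iff.mp hnc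
    rcases hne.lt_or_gt with h | h
    exacts [⟨p, q, hpq, h⟩, ⟨q, p, hpq.symm, h⟩]
  obtain ⟨a, ha⟩ : ∃ a, j.val = i.val + (a + 1) := ⟨j.val - i.val - 1, by omega⟩
  obtain ⟨b, hb⟩ : ∃ b, ℓ + 1 = (a + 1) + (b + 1) := ⟨ℓ - a - 1, by omega⟩
  have hj : i + ((a + 1 : ℕ) : Fin (ℓ + 1)) = j := by
    rw [← Fin.cast_val_eq_self j, ha, Nat.cast_add i.val, Fin.cast_val_eq_self]
  have hi : j + ((b + 1 : ℕ) : Fin (ℓ + 1)) = i := by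
    rw [← hj, add_assoc, ← Nat.cast_add, ← hb, Fin.natCast_self, add_zero]
  have hwrap₁ : c (i + ((a + 1 : ℕ) : Fin (ℓ + 1))) = c i := by rw [hj, hij]
  have hwrap₂ : c (j + ((b + 1 : ℕ) : Fin (ℓ + 1))) = c j := by rw [hi, hij]
  refine ⟨a, b, subcycle c i a, subcycle c j b, by omega, by omega, isCycle_subcycle hc hwrap₁,
    isCycle_subcycle hc hwrap₂, ?_⟩
  have hshift (x : ℕ) : i + ((a + 1 + x : ℕ) : Fin (ℓ + 1)) = j + (x : Fin (ℓ + 1)) := by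
    rw [Nat.cast_add (a + 1), ← add_assoc, hj]
  rw [cycleWeight_subcycle g hwrap₁, cycleWeight_subcycle g hwrap₂, cycleWeight_eq_sum_range g c i,
    show range (ℓ + 1) = range ((a + 1) + (b + 1)) by rw [← hb], sum_range_add]
  simp only [hshift]

theorem cycleWeight_pos_of_injective {P : V → V → Prop} {g : V → V → ℝ}
    (hsimple : ∀ (ℓ : ℕ) (c : Fin (ℓ + 1) → V), IsCycle P c → Function.Injective c →
      0 < cycleWeight g c)
    (ℓ : ℕ) (c : Fin (ℓ + 1) → V) (hc : IsCycle P c) : 0 < cycleWeight g c := by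
  induction ℓ using Nat.strong_induction_on with
  | _ ℓ ih =>
    by_cases hinj : Function.Injective c
    · exact hsimple ℓ c hc hinj
    · obtain ⟨a, b, c₁, c₂, ha, hb, hc₁, hc₂, hsum⟩ :=
        exists_shorter_cycles_of_not_injective hc hinj g
      rw [hsum]
      exact add_pos (ih a ha c₁ hc₁) (ih b hb c₂ hc₂)

lemma cycleWeight_sub_const {ℓ : ℕ} (W : V → V → ℝ) (ε : ℝ) (c : Fin (ℓ + 1) → V) :
    cycleWeight (fun x y => W x y - ε) c = cycleWeight W c - (ℓ + 1) * ε := by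
  simp [cycleWeight, sum_sub_distrib]

end CycleDecomposition

theorem stmt_1 {V : Type*} [Fintype V] (E : V → V → Prop) (W : V → V → ℝ) (Δ : ℝ)
    (hnoneg : ∀ (ℓ : ℕ) (c : Fin (ℓ + 1) → V), IsCycle E c → 0 ≤ cycleWeight W c)
    (hΔpos : 0 < Δ)
    (hΔmin : ∀ (ℓ : ℕ) (c : Fin (ℓ + 1) → V), IsCycle E c → 0 < cycleWeight W c →
      Δ ≤ cycleWeight W c)
    (ε : ℝ) (hε : ε = Δ / (Fintype.card V + 1)) :
    ∀ (ℓ : ℕ) (c : Fin (ℓ + 1) → V),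
      (∀ j : Fin (ℓ + 1), E (c j) (c (j + 1)) ∧ ¬ OnZeroCycle E W (c j) (c (j + 1))) →
      0 < ∑ j : Fin (ℓ + 1), (W (c j) (c (j + 1)) - ε) := by
  intro ℓ c hc
  refine cycleWeight_pos_of_injective (P := fun x y => E x y ∧ ¬ OnZeroCycle E W x y)
    (g := fun x y => W x y - ε) (fun m d hd hinj => ?_) ℓ c hc
  have hdE : IsCycle E d := fun j => (hd j).1
  have hne : cycleWeight W d ≠ 0 := fun h0 => (hd 0).2 ⟨m, d, hdE, h0, 0, rfl, rfl⟩
  have hΔle : Δ ≤ cycleWeight W d := hΔmin m d hdE ((hnoneg m d hdE).lt_of_ne' hne)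
  have hlen : (m + 1 : ℝ) ≤ Fintype.card V := by
    exact_mod_cast Fintype.card_fin (m + 1) ▸ Fintype.card_le_of_injective d hinj
  have hshort : (m + 1) * ε < Δ := by
    rw [hε, mul_div_assoc', div_lt_iff₀ (by positivity)]
    nlinarith
  rw [cycleWeight_sub_const]
  linarith
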